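/- arXiv:0908.2038 — 3 statements merged into one kernel-verified Lean document; each statement's English description precedes it below -/
import Mathlib

section
/- Let n ≥ 1 and d ≥ 2 be integers, let Q be a doubly stochastic matrix indexed by (Fin n × Fin d) × (Fin n × Fin d) (all entries nonnegative, all row sums and column sums equal to 1), let x, y : Fin n → Fin d, let U = {i : x(i) ≠ y(i)} with m = |U|, and let M be the complement of U. Define Λ₂(Q) = Σ_{i,j ∈ U, i ≠ j} Q((i, y(i)),(j, x(j))) and Λ₁(Q) = Σ_{i ∈ U} Σ_{k=1}^{d} Q((i,k),(i,k)) + Σ_{i,j ∈ U, i ≠ j} Σ_{k,l} Q((i,k),(j,l))·(1{k = y(i), l ≠ x(j)} + 1{k ≠ y(i), l = x(j)}) + Σ_{i ∈ U, j ∈ M} Q((i, y(i)),(j, y(j))) + Σ_{i ∈ M, j ∈ U} Q((i, x(i)),(j, x(j))). Then Λ₂(Q) ≤ m, 0 ≤ Λ₁(Q) ≤ md, and Λ₁(Q) + 2·Λ₂(Q) ≤ md. -/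
open Finset

/-- The set of unmatched coordinates. -/
def Uset {n d : ℕ} (x y : Fin n → Fin d) : Finset (Fin n) :=
  Finset.univ.filter (fun i => x i ≠ y i)

/-- The set of matched coordinates. -/
def Mset {n d : ℕ} (x y : Fin n → Fin d) : Finset (Fin n) :=
  Finset.univ.filter (fun i => x i = y i)

/-- `Λ₂(Q)`: (d−1) times the rate at which the number of unmatched coordinates
decreases by two. -/
noncomputable def Lambda2 {n d : ℕ} (x y : Fin n → Fin d)
    (Q : (Fin n × Fin d) → (Fin n × Fin d) → ℝ) : ℝ :=
  ∑ i ∈ Uset x y, ∑ j ∈ Uset x y, if i ≠ j then Q (i, y i) (j, x j) else 0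

/-- `Λ₁(Q)`: (d−1) times the rate at which the number of unmatched coordinates
decreases by one. -/
noncomputable def Lambda1 {n d : ℕ} (x y : Fin n → Fin d)
    (Q : (Fin n × Fin d) → (Fin n × Fin d) → ℝ) : ℝ :=
  (∑ i ∈ Uset x y, ∑ k : Fin d, Q (i, k) (i, k))
  + (∑ i ∈ Uset x y, ∑ j ∈ Uset x y, if i ≠ j then
      ∑ k : Fin d, ∑ l : Fin d, Q (i, k) (j, l) *
        ((if k = y i ∧ l ≠ x j then (1 : ℝ) else 0)
          + (if k ≠ y i ∧ l = x j then (1 : ℝ) else 0))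
      else 0)
  + (∑ i ∈ Uset x y, ∑ j ∈ Mset x y, Q (i, y i) (j, y j))
  + (∑ i ∈ Mset x y, ∑ j ∈ Uset x y, Q (i, x i) (j, x j))

lemma pair_split (d : ℕ) (f : Fin d → Fin d → ℝ) (a b : Fin d) :
    (∑ k : Fin d, ∑ l : Fin d, f k l * ((if k = a ∧ l ≠ b then (1:ℝ) else 0)
        + (if k ≠ a ∧ l = b then (1:ℝ) else 0))) + 2 * f a b
    = (∑ l : Fin d, f a l) + (∑ k : Fin d, f k b) := by
  have e1 : ∀ (g : Fin d → ℝ) (c : Fin d),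
      (∑ l : Fin d, if l = c then 0 else g l) + g c = ∑ l : Fin d, g l := by
    intro g c
    have h : g c = ∑ l : Fin d, if l = c then g l else 0 := by
      rw [Finset.sum_ite_eq' univ c g]; simp
    rw [h, ← Finset.sum_add_distrib]
    refine Finset.sum_congr rfl fun l _ => ?_
    split <;> simp
  have h1 : (∑ k : Fin d, ∑ l : Fin d, f k l * (if k = a ∧ l ≠ b then (1:ℝ) else 0))
      = ∑ l : Fin d, if l = b then 0 else f a l := by
    simp [mul_ite, ite_and, Finset.sum_ite_eq']
  have h2 : (∑ k : Fin d, ∑ l : Fin d, f k l * (if k ≠ a ∧ l = b then (1:ℝ) else 0))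
      = ∑ k : Fin d, if k = a then 0 else f k b := by
    simp [mul_ite, ite_and, Finset.sum_ite_eq']
  have expand : (∑ k : Fin d, ∑ l : Fin d, f k l * ((if k = a ∧ l ≠ b then (1:ℝ) else 0)
        + (if k ≠ a ∧ l = b then (1:ℝ) else 0)))
      = (∑ k : Fin d, ∑ l : Fin d, f k l * (if k = a ∧ l ≠ b then (1:ℝ) else 0))
        + (∑ k : Fin d, ∑ l : Fin d, f k l * (if k ≠ a ∧ l = b then (1:ℝ) else 0)) := by
    simp [mul_add, Finset.sum_add_distrib]
  rw [expand, h1, h2]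
  have := e1 (f a) b
  have := e1 (fun k => f k b) a
  linarith

lemma helper_line {n d : ℕ} (f : Fin n × Fin d → ℝ)
    (hf : ∀ q, 0 ≤ f q) (hsum : ∑ q : Fin n × Fin d, f q = 1)
    (U : Finset (Fin n)) (i : Fin n) (hi : i ∈ U) (a : Fin d) (b : Fin n → Fin d) :
    f (i, a) + (∑ j ∈ U, if j ≠ i then ∑ l : Fin d, f (j, l) else 0)
      + ∑ j ∈ univ \ U, f (j, b j) ≤ 1 := by
  have hsum' : ∑ j : Fin n, ∑ l : Fin d, f (j, l) = 1 := by
    rw [← hsum]; exact (Fintype.sum_prod_type f).symm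
  have h2 : (∑ j ∈ U, if j ≠ i then ∑ l : Fin d, f (j, l) else 0)
      = ∑ j ∈ U.erase i, ∑ l : Fin d, f (j, l) := by
    rw [← Finset.sum_filter, Finset.filter_ne']
  have h3 : f (i, a) ≤ ∑ l : Fin d, f (i, l) :=
    Finset.single_le_sum (fun l _ => hf _) (mem_univ a)
  have h4 : ∑ j ∈ univ \ U, f (j, b j) ≤ ∑ j ∈ univ \ U, ∑ l : Fin d, f (j, l) :=
    Finset.sum_le_sum fun j _ => Finset.single_le_sum (fun l _ => hf _) (mem_univ _)
  have h5 : (∑ l : Fin d, f (i, l)) + ∑ j ∈ U.erase i, ∑ l : Fin d, f (j, l)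
      = ∑ j ∈ U, ∑ l : Fin d, f (j, l) :=
    Finset.add_sum_erase U (fun j => ∑ l : Fin d, f (j, l)) hi
  have h6 : (∑ j ∈ univ \ U, ∑ l : Fin d, f (j, l)) + ∑ j ∈ U, ∑ l : Fin d, f (j, l)
      = ∑ j : Fin n, ∑ l : Fin d, f (j, l) :=
    Finset.sum_sdiff (subset_univ U)
  rw [h2]
  linarith

theorem lambda_bounds_for_doubly_stochastic
    (n d : ℕ) (hn : 1 ≤ n) (hd : 2 ≤ d)
    (Q : (Fin n × Fin d) → (Fin n × Fin d) → ℝ)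
    (hQnonneg : ∀ p q : Fin n × Fin d, 0 ≤ Q p q)
    (hQrow : ∀ p : Fin n × Fin d, ∑ q : Fin n × Fin d, Q p q = 1)
    (hQcol : ∀ q : Fin n × Fin d, ∑ p : Fin n × Fin d, Q p q = 1)
    (x y : Fin n → Fin d) (m : ℕ) (hm : m = (Uset x y).card) :
    Lambda2 x y Q ≤ m ∧
    0 ≤ Lambda1 x y Q ∧ Lambda1 x y Q ≤ m * d ∧
    Lambda1 x y Q + 2 * Lambda2 x y Q ≤ m * d := by
  classical
  set U := Uset x y with hUdef
  have hM : Mset x y = univ \ U := by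
    rw [hUdef]; ext i; simp [Mset, Uset]
  have hxy : ∀ i ∈ U, x i ≠ y i := by
    intro i hi; simpa [hUdef, Uset] using hi
  -- nonnegativity
  have hL2nn : 0 ≤ Lambda2 x y Q := by
    unfold Lambda2
    refine sum_nonneg fun i _ => sum_nonneg fun j _ => ?_
    split
    · exact hQnonneg _ _
    · exact le_refl 0
  have hL1nn : 0 ≤ Lambda1 x y Q := by
    unfold Lambda1
    refine add_nonneg (add_nonneg (add_nonneg ?_ ?_) ?_) ?_
    · exact sum_nonneg fun i _ => sum_nonneg fun k _ => hQnonneg _ _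
    · refine sum_nonneg fun i _ => sum_nonneg fun j _ => ?_
      split
      · refine sum_nonneg fun k _ => sum_nonneg fun l _ => ?_
        refine mul_nonneg (hQnonneg _ _) ?_
        positivity
      · exact le_refl 0
    · exact sum_nonneg fun i _ => sum_nonneg fun j _ => hQnonneg _ _
    · exact sum_nonneg fun i _ => sum_nonneg fun j _ => hQnonneg _ _
  -- row bound
  have hrow : (∑ i ∈ U, Q (i, y i) (i, y i))
      + (∑ i ∈ U, ∑ j ∈ U, if j ≠ i then ∑ l : Fin d, Q (i, y i) (j, l) else 0)
      + (∑ i ∈ U, ∑ j ∈ univ \ U, Q (i, y i) (j, y j)) ≤ (m : ℝ) := by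
    rw [← Finset.sum_add_distrib, ← Finset.sum_add_distrib]
    calc _ ≤ ∑ _i ∈ U, (1 : ℝ) :=
          Finset.sum_le_sum fun i hi =>
            helper_line (fun q => Q (i, y i) q) (fun q => hQnonneg _ q)
              (hQrow (i, y i)) U i hi (y i) y
      _ = (m : ℝ) := by simp [hm, hUdef]
  -- column bound
  have hcol : (∑ j ∈ U, Q (j, x j) (j, x j))
      + (∑ j ∈ U, ∑ i ∈ U, if i ≠ j then ∑ k : Fin d, Q (i, k) (j, x j) else 0)
      + (∑ j ∈ U, ∑ i ∈ univ \ U, Q (i, x i) (j, x j)) ≤ (m : ℝ) := by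
    rw [← Finset.sum_add_distrib, ← Finset.sum_add_distrib]
    calc _ ≤ ∑ _j ∈ U, (1 : ℝ) :=
          Finset.sum_le_sum fun j hj =>
            helper_line (fun p => Q p (j, x j)) (fun p => hQnonneg p _)
              (hQcol (j, x j)) U j hj (x j) x
      _ = (m : ℝ) := by simp [hm, hUdef]
  -- remaining diagonal entries
  have hdiag : (∑ i ∈ U, ∑ k ∈ (univ.erase (y i)).erase (x i), Q (i, k) (i, k))
      ≤ (m : ℝ) * ((d : ℝ) - 2) := by
    have hper : ∀ i ∈ U, (∑ k ∈ (univ.erase (y i)).erase (x i), Q (i, k) (i, k))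
        ≤ (d : ℝ) - 2 := by
      intro i hi
      have hcard : ((univ.erase (y i)).erase (x i)).card = d - 2 := by
        rw [Finset.card_erase_of_mem (Finset.mem_erase.2 ⟨hxy i hi, mem_univ _⟩),
          Finset.card_erase_of_mem (mem_univ _)]
        simp only [Finset.card_univ, Fintype.card_fin]
        omega
      calc (∑ k ∈ (univ.erase (y i)).erase (x i), Q (i, k) (i, k))
          ≤ ∑ _k ∈ (univ.erase (y i)).erase (x i), (1 : ℝ) := by
            refine Finset.sum_le_sum fun k _ => ?_
            rw [← hQrow (i, k)]
            exact Finset.single_le_sum (f := fun q => Q (i, k) q)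
              (fun q _ => hQnonneg _ _) (mem_univ (i, k))
        _ = ((d - 2 : ℕ) : ℝ) := by rw [Finset.sum_const, hcard]; simp
        _ ≤ (d : ℝ) - 2 := by
            rw [Nat.cast_sub hd]; simp
    calc _ ≤ ∑ _i ∈ U, ((d : ℝ) - 2) := Finset.sum_le_sum hper
      _ = (m : ℝ) * ((d : ℝ) - 2) := by rw [Finset.sum_const, hm, hUdef]; simp [mul_comm]
  -- key identity
  have hkey : Lambda1 x y Q + 2 * Lambda2 x y Q
      = ((∑ i ∈ U, Q (i, y i) (i, y i))
          + (∑ i ∈ U, ∑ j ∈ U, if j ≠ i then ∑ l : Fin d, Q (i, y i) (j, l) else 0)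
          + (∑ i ∈ U, ∑ j ∈ univ \ U, Q (i, y i) (j, y j)))
        + ((∑ j ∈ U, Q (j, x j) (j, x j))
          + (∑ j ∈ U, ∑ i ∈ U, if i ≠ j then ∑ k : Fin d, Q (i, k) (j, x j) else 0)
          + (∑ j ∈ U, ∑ i ∈ univ \ U, Q (i, x i) (j, x j)))
        + (∑ i ∈ U, ∑ k ∈ (univ.erase (y i)).erase (x i), Q (i, k) (i, k)) := by
    unfold Lambda1 Lambda2
    rw [hM]
    -- diagonal split
    have eD : (∑ i ∈ U, ∑ k : Fin d, Q (i, k) (i, k))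
        = (∑ i ∈ U, Q (i, y i) (i, y i)) + (∑ i ∈ U, Q (i, x i) (i, x i))
          + (∑ i ∈ U, ∑ k ∈ (univ.erase (y i)).erase (x i), Q (i, k) (i, k)) := by
      rw [add_assoc, ← Finset.sum_add_distrib, ← Finset.sum_add_distrib]
      refine Finset.sum_congr rfl fun i hi => ?_
      rw [← Finset.add_sum_erase _ _ (mem_univ (y i)),
        ← Finset.add_sum_erase _ (fun k => Q (i, k) (i, k))
          (Finset.mem_erase.2 ⟨hxy i hi, mem_univ (x i)⟩)]
    -- cross terms plus 2*Lambda2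
    have eS : (∑ i ∈ U, ∑ j ∈ U, if i ≠ j then
          ∑ k : Fin d, ∑ l : Fin d, Q (i, k) (j, l) *
            ((if k = y i ∧ l ≠ x j then (1 : ℝ) else 0)
              + (if k ≠ y i ∧ l = x j then (1 : ℝ) else 0)) else 0)
        + 2 * (∑ i ∈ U, ∑ j ∈ U, if i ≠ j then Q (i, y i) (j, x j) else 0)
        = (∑ i ∈ U, ∑ j ∈ U, if i ≠ j then ∑ l : Fin d, Q (i, y i) (j, l) else 0)
          + (∑ i ∈ U, ∑ j ∈ U, if i ≠ j then ∑ k : Fin d, Q (i, k) (j, x j) else 0) := by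
      rw [Finset.mul_sum, ← Finset.sum_add_distrib, ← Finset.sum_add_distrib]
      refine Finset.sum_congr rfl fun i _ => ?_
      rw [Finset.mul_sum, ← Finset.sum_add_distrib, ← Finset.sum_add_distrib]
      refine Finset.sum_congr rfl fun j _ => ?_
      split
      · exact pair_split d (fun k l => Q (i, k) (j, l)) (y i) (x j)
      · simp
    -- reorient conditions / orders
    have eflip : (∑ i ∈ U, ∑ j ∈ U, if i ≠ j then ∑ l : Fin d, Q (i, y i) (j, l) else 0)
        = (∑ i ∈ U, ∑ j ∈ U, if j ≠ i then ∑ l : Fin d, Q (i, y i) (j, l) else 0) :=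
      Finset.sum_congr rfl fun i _ => Finset.sum_congr rfl fun j _ =>
        if_congr ne_comm rfl rfl
    have eswap : (∑ i ∈ U, ∑ j ∈ U, if i ≠ j then ∑ k : Fin d, Q (i, k) (j, x j) else 0)
        = (∑ j ∈ U, ∑ i ∈ U, if i ≠ j then ∑ k : Fin d, Q (i, k) (j, x j) else 0) :=
      Finset.sum_comm
    have eF : (∑ i ∈ univ \ U, ∑ j ∈ U, Q (i, x i) (j, x j))
        = (∑ j ∈ U, ∑ i ∈ univ \ U, Q (i, x i) (j, x j)) := Finset.sum_comm
    rw [eD, eF] at *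
    linarith [eS, eflip, eswap]
  -- Lambda2 ≤ SRow
  have hL2row : Lambda2 x y Q
      ≤ ∑ i ∈ U, ∑ j ∈ U, if j ≠ i then ∑ l : Fin d, Q (i, y i) (j, l) else 0 := by
    unfold Lambda2
    refine Finset.sum_le_sum fun i _ => Finset.sum_le_sum fun j _ => ?_
    by_cases h : i = j
    · simp [h]
    · rw [if_pos h, if_pos (Ne.symm h)]
      exact Finset.single_le_sum (fun l _ => hQnonneg _ _) (mem_univ (x j))
  have hT : (0:ℝ) ≤ ∑ i ∈ U, ∑ j ∈ univ \ U, Q (i, y i) (j, y j) :=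
    sum_nonneg fun i _ => sum_nonneg fun j _ => hQnonneg _ _
  have hD1 : (0:ℝ) ≤ ∑ i ∈ U, Q (i, y i) (i, y i) :=
    sum_nonneg fun i _ => hQnonneg _ _
  have hmd : (m : ℝ) * d = (m : ℝ) + (m : ℝ) + (m : ℝ) * ((d : ℝ) - 2) := by ring
  have hmain : Lambda1 x y Q + 2 * Lambda2 x y Q ≤ (m : ℝ) * d := by
    rw [hkey, hmd]; linarith
  refine ⟨?_, hL1nn, ?_, hmain⟩
  · linarith
  · push_cast at hmain ⊢; linarith
end

section
/- Fix an integer d ≥ 4 and define v_d(m,t) by the recursion v_d(0,t) = 0, v_d(1,t) = exp(−dt/(d−1)), and for m ≥ 2, v_d(m,t) = e^{−mt} + ∫_0^t (m e^{−mu}/(d−1))·[m·v_d(m−2, t−u) + m(d−2)·v_d(m−1, t−u)] du. Then v_d(m,t) is strictly increasing in m: for every integer m ≥ 1, v_d(m−1,t) ≤ v_d(m,t) for all t ≥ 0, with strict inequality v_d(m−1,t) < v_d(m,t) for all t > 0. -/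
open MeasureTheory intervalIntegral in
/-- Tail probability `v_d(m,t)` of the coupling time of the optimal co-adapted
coupling, defined recursively in `m`. -/
noncomputable def v (d : ℕ) : ℕ → ℝ → ℝ
  | 0, _ => 0
  | 1, t => Real.exp (-((d : ℝ) * t) / ((d : ℝ) - 1))
  | (m + 2), t =>
      Real.exp (-((m : ℝ) + 2) * t) +
        ∫ u in (0 : ℝ)..t,
          (((m : ℝ) + 2) * Real.exp (-((m : ℝ) + 2) * u) / ((d : ℝ) - 1)) *
            (((m : ℝ) + 2) * v d m (t - u) +
              ((m : ℝ) + 2) * ((d : ℝ) - 2) * v d (m + 1) (t - u))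

/-! Differentiating the convolution shows that `v_{m+2}` solves the linear ODE
`y' = -(m+2) y + (m+2)² / (d-1) · (v_m + (d-2) v_{m+1})`, while `v_1' = -d/(d-1) · v_1`, and
`v_{m+1}(0) = 1`. If `f' = -c f + F` and `g' = -c g + G` with `f(0) = g(0)` and `G < F` for `t > 0`,
then `e^{ct} (f - g)` increases strictly from `0`, so `g < f` for `t > 0`. Writing the ODE of
`v_{m+1}` at the rate `m + 2` of `v_{m+2}` adds `v_{m+1}` to its forcing term; given
`v_{m-1} ≤ v_m ≤ v_{m+1}` by induction, the forcing terms then compare because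
`(2m+3)(d-2) > d-1` for `m ≥ 1`. -/

open Real

lemma hasDerivAt_exp_mul_one_add_primitive {W : ℝ → ℝ} (hW : Continuous W) (c K t : ℝ) :
    HasDerivAt (fun x => exp (-c * x) * (1 + K * ∫ s in (0 : ℝ)..x, exp (c * s) * W s))
      (-c * (exp (-c * t) * (1 + K * ∫ s in (0 : ℝ)..t, exp (c * s) * W s)) + K * W t) t := by
  have hE : HasDerivAt (fun x => exp (-c * x)) (exp (-c * t) * -c) t :=
    ((hasDerivAt_id t).const_mul (-c)).exp.congr_deriv (by simp)
  have hcont : Continuous fun s => exp (c * s) * W s := by fun_prop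
  have hI := ((hcont.integral_hasStrictDerivAt 0 t).hasDerivAt.const_mul K).const_add 1
  refine (hE.mul hI).congr_deriv ?_
  have : exp (-c * t) * exp (c * t) = 1 := by rw [← exp_add]; simp
  linear_combination K * W t * this

lemma v_add_two_eq (d m : ℕ) (t : ℝ) :
    v d (m + 2) t = exp (-((m : ℝ) + 2) * t) * (1 + ((m : ℝ) + 2) ^ 2 / ((d : ℝ) - 1) *
      ∫ s in (0 : ℝ)..t, exp (((m : ℝ) + 2) * s) * (v d m s + ((d : ℝ) - 2) * v d (m + 1) s)) := by
  set c : ℝ := (m : ℝ) + 2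
  have hsub := intervalIntegral.integral_comp_sub_left (a := 0) (b := t) (fun s =>
    c * exp (-c * (t - s)) / ((d : ℝ) - 1) * (c * v d m s + c * ((d : ℝ) - 2) * v d (m + 1) s)) t
  simp only [sub_self, sub_zero, sub_sub_cancel] at hsub
  have hfactor : ∀ s, c * exp (-c * (t - s)) / ((d : ℝ) - 1) *
      (c * v d m s + c * ((d : ℝ) - 2) * v d (m + 1) s) = exp (-c * t) * (c ^ 2 / ((d : ℝ) - 1)) *
      (exp (c * s) * (v d m s + ((d : ℝ) - 2) * v d (m + 1) s)) := fun s => by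
    rw [show -c * (t - s) = -c * t + c * s by ring, exp_add]; ring
  rw [v, hsub]
  simp only [hfactor, intervalIntegral.integral_const_mul]
  ring

lemma v_zero (d : ℕ) (t : ℝ) : v d 0 t = 0 := rfl

lemma v_succ_zero (d m : ℕ) : v d (m + 1) 0 = 1 := by
  cases m <;> simp [v]

lemma v_one_eq (d : ℕ) : v d 1 = fun t => exp (-((d : ℝ) * t) / ((d : ℝ) - 1)) := by
  funext t; rw [v]

lemma continuous_v (d m : ℕ) : Continuous (v d m) := by
  induction m using Nat.strong_induction_on with
  | _ m ih =>
    match m, ih with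
    | 0, _ => exact continuous_const
    | 1, _ => rw [v_one_eq]; fun_prop
    | m + 2, ih =>
      have hW : Continuous fun s => v d m s + ((d : ℝ) - 2) * v d (m + 1) s :=
        (ih m (by omega)).add (continuous_const.mul (ih (m + 1) (by omega)))
      rw [funext (v_add_two_eq d m)]
      exact continuous_iff_continuousAt.2 fun t =>
        (hasDerivAt_exp_mul_one_add_primitive hW _ _ t).continuousAt

lemma hasDerivAt_v_one (d : ℕ) (t : ℝ) :
    HasDerivAt (v d 1) (-((d : ℝ) / ((d : ℝ) - 1)) * v d 1 t) t := by
  rw [v_one_eq]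
  convert ((hasDerivAt_id t).const_mul (-((d : ℝ) / ((d : ℝ) - 1)))).exp using 1
  · funext x; congr 1; simp only [id]; ring
  · simp only [id]; ring_nf

lemma hasDerivAt_v_add_two (d m : ℕ) (t : ℝ) :
    HasDerivAt (v d (m + 2)) (-((m : ℝ) + 2) * v d (m + 2) t +
      ((m : ℝ) + 2) ^ 2 / ((d : ℝ) - 1) * (v d m t + ((d : ℝ) - 2) * v d (m + 1) t)) t := by
  have h := hasDerivAt_exp_mul_one_add_primitive
    (W := fun s => v d m s + ((d : ℝ) - 2) * v d (m + 1) s)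
    ((continuous_v d m).add (continuous_const.mul (continuous_v d (m + 1)))) ((m : ℝ) + 2)
    (((m : ℝ) + 2) ^ 2 / ((d : ℝ) - 1)) t
  simp only [← v_add_two_eq] at h
  exact h

lemma v_add_two_pos {d m : ℕ} (hd : 2 ≤ d) {t : ℝ} (ht : 0 ≤ t)
    (hm : ∀ s, 0 ≤ s → 0 ≤ v d m s) (hm1 : ∀ s, 0 ≤ s → 0 ≤ v d (m + 1) s) :
    0 < v d (m + 2) t := by
  have hd' : (2 : ℝ) ≤ d := by exact_mod_cast hd
  have hint : 0 ≤ ∫ s in (0 : ℝ)..t, exp (((m : ℝ) + 2) * s) *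
      (v d m s + ((d : ℝ) - 2) * v d (m + 1) s) :=
    intervalIntegral.integral_nonneg ht fun s hs => mul_nonneg (exp_pos _).le
      (add_nonneg (hm s hs.1) (mul_nonneg (by linarith) (hm1 s hs.1)))
  rw [v_add_two_eq]
  have : 0 ≤ ((m : ℝ) + 2) ^ 2 / ((d : ℝ) - 1) := div_nonneg (by positivity) (by linarith)
  positivity

lemma v_nonneg {d : ℕ} (hd : 2 ≤ d) (m : ℕ) {t : ℝ} (ht : 0 ≤ t) : 0 ≤ v d m t := by
  induction m using Nat.strong_induction_on generalizing t with
  | _ m ih =>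
    match m, ih with
    | 0, _ => exact (v_zero d t).ge
    | 1, _ => rw [v_one_eq]; positivity
    | m + 2, ih =>
      exact (v_add_two_pos hd ht (fun s hs => ih m (by omega) hs)
        (fun s hs => ih (m + 1) (by omega) hs)).le

lemma v_succ_pos {d : ℕ} (hd : 2 ≤ d) (m : ℕ) {t : ℝ} (ht : 0 ≤ t) : 0 < v d (m + 1) t := by
  cases m with
  | zero => rw [v_one_eq]; positivity
  | succ m => exact v_add_two_pos hd ht (fun s => v_nonneg hd m) (fun s => v_nonneg hd (m + 1))

lemma lt_of_hasDerivAt_of_forcing_lt {c : ℝ} {f g F G : ℝ → ℝ}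
    (hf : ∀ t, HasDerivAt f (-c * f t + F t) t) (hg : ∀ t, HasDerivAt g (-c * g t + G t) t)
    (h0 : f 0 = g 0) (hGF : ∀ t, 0 < t → G t < F t) {t : ℝ} (ht : 0 < t) : g t < f t := by
  have hh : ∀ x, HasDerivAt (fun y => exp (c * y) * (f y - g y))
      (exp (c * x) * (F x - G x)) x := fun x =>
    ((((hasDerivAt_id x).const_mul c).exp).mul ((hf x).sub (hg x))).congr_deriv (by simp; ring)
  have hmono : StrictMonoOn (fun y => exp (c * y) * (f y - g y)) (Set.Ici 0) := by
    refine strictMonoOn_of_deriv_pos (convex_Ici 0)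
      (fun x _ => (hh x).continuousAt.continuousWithinAt) fun x hx => ?_
    rw [interior_Ici] at hx
    rw [(hh x).deriv]
    exact mul_pos (exp_pos _) (sub_pos.2 (hGF x hx))
  have := hmono Set.self_mem_Ici ht.le ht
  simp only [mul_zero, h0, sub_self] at this
  exact sub_pos.1 (pos_of_mul_pos_right this (exp_pos _).le)

-- The forcing terms of `v_{n+2}` and `v_{n+3}` at the common rate `x + 1 = n + 3`,
-- with `(a, b, c) = (v_n, v_{n+1}, v_{n+2})`.
lemma forcing_lt {x d a b c : ℝ} (hx : 2 ≤ x) (hd : 3 ≤ d) (hab : a ≤ b) (hb : 0 ≤ b)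
    (hbc : b ≤ c) (hc : 0 < c) :
    c + x ^ 2 / (d - 1) * (a + (d - 2) * b) < (x + 1) ^ 2 / (d - 1) * (b + (d - 2) * c) := by
  have hd1 : 0 < d - 1 := by linarith
  have key : (d - 1) * c + x ^ 2 * (a + (d - 2) * b) < (x + 1) ^ 2 * (b + (d - 2) * c) := by
    nlinarith [mul_le_mul_of_nonneg_left hab (sq_nonneg x),
      mul_le_mul_of_nonneg_left hbc (mul_nonneg (sq_nonneg x) (by linarith : (0 : ℝ) ≤ d - 2)),
      mul_pos hc (by linarith : (0 : ℝ) < 4 * d - 9)]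
  rw [← sub_pos]
  have : (x + 1) ^ 2 / (d - 1) * (b + (d - 2) * c) - (c + x ^ 2 / (d - 1) * (a + (d - 2) * b)) =
      ((x + 1) ^ 2 * (b + (d - 2) * c) - ((d - 1) * c + x ^ 2 * (a + (d - 2) * b))) / (d - 1) := by
    field_simp
  rw [this]
  exact div_pos (sub_pos.2 key) hd1

lemma v_one_lt_v_two {d : ℕ} (hd : 3 ≤ d) {t : ℝ} (ht : 0 < t) : v d 1 t < v d 2 t := by
  have hd3 : (3 : ℝ) ≤ d := by exact_mod_cast hd
  have hd1 : (d : ℝ) - 1 ≠ 0 := by linarith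
  refine lt_of_hasDerivAt_of_forcing_lt (hasDerivAt_v_add_two d 0)
    (G := fun s => (((0 : ℕ) : ℝ) + 2 - d / ((d : ℝ) - 1)) * v d 1 s)
    (fun s => (hasDerivAt_v_one d s).congr_deriv (by ring)) (by rw [v_succ_zero, v_succ_zero])
    (fun s hs => ?_) ht
  have hgap : (((0 : ℕ) : ℝ) + 2) ^ 2 / ((d : ℝ) - 1) * (v d 0 s + ((d : ℝ) - 2) * v d 1 s) -
      (((0 : ℕ) : ℝ) + 2 - d / ((d : ℝ) - 1)) * v d 1 s = 3 * (d - 2) / (d - 1) * v d 1 s := by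
    rw [v_zero, Nat.cast_zero]
    field_simp
    ring
  have : 0 < 3 * ((d : ℝ) - 2) / (d - 1) * v d 1 s :=
    mul_pos (div_pos (by linarith) (by linarith)) (v_succ_pos (by omega) 0 hs.le)
  linarith

lemma v_add_two_lt_v_add_three {d j : ℕ} (hd : 3 ≤ d)
    (hj : ∀ s, 0 < s → v d j s ≤ v d (j + 1) s) (hj1 : ∀ s, 0 < s → v d (j + 1) s ≤ v d (j + 2) s)
    {t : ℝ} (ht : 0 < t) : v d (j + 2) t < v d (j + 3) t := by
  refine lt_of_hasDerivAt_of_forcing_lt (hasDerivAt_v_add_two d (j + 1))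
    (G := fun s => v d (j + 2) s +
      ((j : ℝ) + 2) ^ 2 / ((d : ℝ) - 1) * (v d j s + ((d : ℝ) - 2) * v d (j + 1) s))
    (fun s => (hasDerivAt_v_add_two d j s).congr_deriv (by push_cast; ring))
    (by rw [v_succ_zero, v_succ_zero]) (fun s hs => ?_) ht
  have := forcing_lt (x := (j : ℝ) + 2) (d := d) (by linarith [j.cast_nonneg (α := ℝ)])
    (by exact_mod_cast hd) (hj s hs) (v_nonneg (by omega) (j + 1) hs.le) (hj1 s hs)
    (v_succ_pos (by omega) (j + 1) hs.le)
  push_cast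
  convert this using 3
  ring

lemma v_lt_v_succ {d : ℕ} (hd : 3 ≤ d) (k : ℕ) {t : ℝ} (ht : 0 < t) :
    v d k t < v d (k + 1) t := by
  induction k using Nat.strong_induction_on generalizing t with
  | _ k ih =>
    match k, ih with
    | 0, _ => rw [v_zero]; exact v_succ_pos (by omega) 0 ht.le
    | 1, _ => exact v_one_lt_v_two hd ht
    | j + 2, ih =>
      exact v_add_two_lt_v_add_three hd (fun s hs => (ih j (by omega) hs).le)
        (fun s hs => (ih (j + 1) (by omega) hs).le) ht

lemma v_le_v_succ {d : ℕ} (hd : 3 ≤ d) (k : ℕ) {t : ℝ} (ht : 0 ≤ t) :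
    v d k t ≤ v d (k + 1) t := by
  rcases ht.eq_or_lt with rfl | ht
  · cases k with
    | zero => rw [v_zero, v_succ_zero]; exact zero_le_one
    | succ k => rw [v_succ_zero, v_succ_zero]
  · exact (v_lt_v_succ hd k ht).le

theorem v_strictly_increasing_in_m (d : ℕ) (hd : 4 ≤ d) :
    ∀ m : ℕ, 1 ≤ m →
      (∀ t : ℝ, 0 ≤ t → v d (m - 1) t ≤ v d m t) ∧
      (∀ t : ℝ, 0 < t → v d (m - 1) t < v d m t) := by
  intro m hm
  obtain ⟨k, rfl⟩ : ∃ k, m = k + 1 := ⟨m - 1, by omega⟩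
  rw [Nat.add_sub_cancel]
  exact ⟨fun t => v_le_v_succ (by omega) k, fun t => v_lt_v_succ (by omega) k⟩
end

section
/- Fix an integer n ≥ 1 and a real t ≥ 0. On ℝ let ν_t be the measure ν_t = e^{−t}·δ_0 + (1 − e^{−t})·λ, where δ_0 is the Dirac measure at 0 and λ is Lebesgue measure restricted to [0,1); let μ_t be the n-fold product measure of ν_t on ℝ^n and let π be the n-fold product of λ (both are probability measures). Then: (a) for every measurable set A ⊆ ℝ^n, μ_t(A) − π(A) ≤ 1 − (1 − e^{−t})^n; and (b) for A_0 = {x ∈ ℝ^n : x_i = 0 for some i}, one has μ_t(A_0) = 1 − (1 − e^{−t})^n and π(A_0) = 0. Consequently the total variation distance between μ_t and π equals 1 − (1 − e^{−t})^n. -/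
open MeasureTheory

/-- The single-coordinate law at time `t`: `e^{−t}·δ₀ + (1 − e^{−t})·Leb|_{[0,1)}`. -/
noncomputable def nuT (t : ℝ) : Measure ℝ :=
  ENNReal.ofReal (Real.exp (-t)) • Measure.dirac 0 +
    ENNReal.ofReal (1 - Real.exp (-t)) • volume.restrict (Set.Ico 0 1)

/-! Off the set `A₀` where some coordinate still sits at the origin, every coordinate has jumped,
so there `μ_t` is `(1 - e^{-t})^n • π ≤ π`. Hence `μ_t A - π A ≤ μ_t A₀ = 1 - (1 - e^{-t})^n` for
every `A`, while `π A₀ = 0` because the coordinates of `π` have no atoms. -/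

open Set ENNReal

namespace MeasureTheory.Measure

variable {α : Type*} [MeasurableSpace α]

theorem smul_le_self {c : ℝ≥0∞} (hc : c ≤ 1) (μ : Measure α) : c • μ ≤ μ :=
  le_iff'.2 fun _ => mul_le_of_le_one_left' hc

theorem pi_smul {ι : Type*} [Fintype ι] {β : ι → Type*} [∀ i, MeasurableSpace (β i)]
    (μ : ∀ i, Measure (β i)) [∀ i, IsFiniteMeasure (μ i)] {c : ι → ℝ≥0∞} (hc : ∀ i, c i ≠ ∞) :
    Measure.pi (fun i => c i • μ i) = (∏ i, c i) • Measure.pi μ := by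
  have := fun i => (μ i).smul_finite (hc i)
  refine pi_eq fun s hs => ?_
  simp only [smul_apply, smul_eq_mul, pi_pi, Finset.prod_mul_distrib]

theorem measureReal_sub_le_of_restrict_le {μ π : Measure α} [IsFiniteMeasure μ]
    [IsFiniteMeasure π] {B : Set α} (h : μ.restrict B ≤ π) (A : Set α) :
    μ.real A - π.real A ≤ μ.real Bᶜ := by
  have hle : μ A ≤ π A + μ Bᶜ :=
    calc μ A ≤ μ (A ∩ B) + μ (A \ B) := measure_le_inter_add_sdiff μ A B
      _ ≤ π A + μ Bᶜ :=
        add_le_add ((le_restrict_apply B A).trans (h A)) (measure_mono inter_subset_right)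
  have := toReal_le_add hle (measure_ne_top π A) (measure_ne_top μ Bᶜ)
  simp only [measureReal_def]
  linarith

end MeasureTheory.Measure

theorem isProbabilityMeasure_nuT {t : ℝ} (ht : 0 ≤ t) : IsProbabilityMeasure (nuT t) := by
  have h : Real.exp (-t) ≤ 1 := Real.exp_le_one_iff.2 (neg_nonpos.2 ht)
  constructor
  simp [nuT, Real.volume_Ico, ← ofReal_add (Real.exp_nonneg _) (sub_nonneg.2 h)]

theorem nuT_restrict_compl_zero (t : ℝ) :
    (nuT t).restrict {0}ᶜ = ENNReal.ofReal (1 - Real.exp (-t)) • volume.restrict (Ico 0 1) := by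
  have hdirac : (Measure.dirac (0 : ℝ)).restrict {0}ᶜ = 0 := Measure.restrict_eq_zero.2 (by simp)
  simp [nuT, Measure.restrict_add, Measure.restrict_smul, hdirac]

theorem limiting_coupling_is_maximal_general (n : ℕ) (t : ℝ) (ht : 0 ≤ t)
    (μ π : Measure (Fin n → ℝ))
    (hμ : μ = Measure.pi fun _ => nuT t)
    (hπ : π = Measure.pi fun _ => volume.restrict (Set.Ico 0 1)) :
    (∀ A : Set (Fin n → ℝ), MeasurableSet A →
      (μ A).toReal - (π A).toReal ≤ 1 - (1 - Real.exp (-t)) ^ n) ∧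
    (μ {x | ∃ i, x i = 0}).toReal = 1 - (1 - Real.exp (-t)) ^ n ∧
    π {x | ∃ i, x i = 0} = 0 ∧
    IsGreatest {r : ℝ | ∃ A : Set (Fin n → ℝ), MeasurableSet A ∧
        r = (μ A).toReal - (π A).toReal}
      (1 - (1 - Real.exp (-t)) ^ n) := by
  have := isProbabilityMeasure_nuT ht
  have : IsProbabilityMeasure μ := hμ ▸ inferInstance
  have : IsProbabilityMeasure (volume.restrict (Ico (0 : ℝ) 1)) := ⟨by simp⟩
  have : IsProbabilityMeasure π := hπ ▸ inferInstance
  set q := 1 - Real.exp (-t)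
  have hq₀ : 0 ≤ q := sub_nonneg.2 (Real.exp_le_one_iff.2 (neg_nonpos.2 ht))
  have hq₁ : q ≤ 1 := sub_le_self _ (Real.exp_nonneg _)
  set B : Set (Fin n → ℝ) := univ.pi fun _ => {0}ᶜ
  have hB : MeasurableSet B := .univ_pi fun _ => (measurableSet_singleton 0).compl
  have hA₀ : {x : Fin n → ℝ | ∃ i, x i = 0} = Bᶜ := by ext; simp [B]
  have hμB : μ.restrict B = ENNReal.ofReal q ^ n • π := by
    rw [hμ, hπ, Measure.restrict_pi_pi]
    simp_rw [nuT_restrict_compl_zero]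
    rw [Measure.pi_smul _ fun _ => ofReal_ne_top, Finset.prod_const, Finset.card_fin]
  have hπA₀ : π Bᶜ = 0 := by
    rw [← hA₀, hπ, ofPred_exists]
    exact measure_iUnion_null fun i => Measure.pi_hyperplane _ i 0
  have hμA₀ : μ.real Bᶜ = 1 - q ^ n := by
    rw [measureReal_compl hB, probReal_univ, measureReal_def,
      ← Measure.restrict_apply_self, hμB]
    simp [(prob_compl_eq_zero_iff hB).1 hπA₀, hq₀]
  have hbound (A : Set (Fin n → ℝ)) : μ.real A - π.real A ≤ 1 - q ^ n :=
    hμA₀ ▸ Measure.measureReal_sub_le_of_restrict_le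
      (hμB ▸ Measure.smul_le_self (pow_le_one₀ zero_le (ofReal_le_one.2 hq₁)) π) A
  refine ⟨fun A _ => hbound A, hA₀ ▸ hμA₀, hA₀ ▸ hπA₀, ⟨⟨Bᶜ, hB.compl, ?_⟩, ?_⟩⟩
  · rw [hπA₀, ENNReal.toReal_zero, sub_zero]
    exact hμA₀.symm
  · rintro _ ⟨A, -, rfl⟩
    exact hbound A

theorem limiting_coupling_is_maximal (n : ℕ) (hn : 1 ≤ n) (t : ℝ) (ht : 0 ≤ t)
    (μ π : Measure (Fin n → ℝ))
    (hμ : μ = Measure.pi fun _ => nuT t)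
    (hπ : π = Measure.pi fun _ => volume.restrict (Set.Ico 0 1)) :
    (∀ A : Set (Fin n → ℝ), MeasurableSet A →
      (μ A).toReal - (π A).toReal ≤ 1 - (1 - Real.exp (-t)) ^ n) ∧
    (μ {x | ∃ i, x i = 0}).toReal = 1 - (1 - Real.exp (-t)) ^ n ∧
    π {x | ∃ i, x i = 0} = 0 ∧
    IsGreatest {r : ℝ | ∃ A : Set (Fin n → ℝ), MeasurableSet A ∧
        r = (μ A).toReal - (π A).toReal}
      (1 - (1 - Real.exp (-t)) ^ n) :=
  limiting_coupling_is_maximal_general n t ht μ π hμ hπ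
end
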